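/- A homeomorphism f of a compact metric space has the L-shadowing property if and only if f has the shadowing property and for every ε>0 there exists δ>0 such that d(x,y)<δ implies V^s_ε(x) ∩ V^u_ε(y) ≠ ∅, where V^s_ε(x) = W^s(x) ∩ W^s_ε(x) and V^u_ε(y) = W^u(y) ∩ W^u_ε(y). -/

import Mathlib

open Filter Metric Set Topology

variable {X : Type*} [MetricSpace X]

/-- `f^k x` for `k : ℤ`, where `f` is a homeomorphism. -/
def iterZ (f : X ≃ₜ X) (k : ℤ) (x : X) : X :=
  if 0 ≤ k then (⇑f)^[k.toNat] x else (⇑f.symm)^[(-k).toNat] x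

/-- The classical shadowing property. -/
def Shadowing (f : X ≃ₜ X) : Prop :=
  ∀ ε > (0:ℝ), ∃ δ > (0:ℝ), ∀ x : ℤ → X,
    (∀ k : ℤ, dist (f (x k)) (x (k+1)) < δ) →
    ∃ z : X, ∀ k : ℤ, dist (iterZ f k z) (x k) < ε

/-- The L-shadowing property. -/
def LShadowing (f : X ≃ₜ X) : Prop :=
  ∀ ε > (0:ℝ), ∃ δ > (0:ℝ), ∀ x : ℤ → X,
    (∀ k : ℤ, dist (f (x k)) (x (k+1)) ≤ δ) →
    Tendsto (fun k : ℤ => dist (f (x k)) (x (k+1))) cofinite (nhds 0) →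
    ∃ z : X, (∀ k : ℤ, dist (iterZ f k z) (x k) ≤ ε) ∧
      Tendsto (fun k : ℤ => dist (iterZ f k z) (x k)) cofinite (nhds 0)

/-- The stable set of `x`. -/
def stableSet (f : X ≃ₜ X) (x : X) : Set X :=
  {y | Tendsto (fun n : ℕ => dist ((⇑f)^[n] x) ((⇑f)^[n] y)) atTop (nhds 0)}

/-- The unstable set of `x`. -/
def unstableSet (f : X ≃ₜ X) (x : X) : Set X := stableSet f.symm x

/-- The local stable set of size `ε` of `x`. -/
def localStable (f : X ≃ₜ X) (ε : ℝ) (x : X) : Set X :=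
  {y | ∀ n : ℕ, dist ((⇑f)^[n] x) ((⇑f)^[n] y) ≤ ε}

/-- The local unstable set of size `ε` of `x`. -/
def localUnstable (f : X ≃ₜ X) (ε : ℝ) (x : X) : Set X := localStable f.symm ε x

/-- `V^s_ε(x) = W^s(x) ∩ W^s_ε(x)`. -/
def Vs (f : X ≃ₜ X) (ε : ℝ) (x : X) : Set X := stableSet f x ∩ localStable f ε x

/-- `V^u_ε(x) = W^u(x) ∩ W^u_ε(x)`. -/
def Vu (f : X ≃ₜ X) (ε : ℝ) (x : X) : Set X := unstableSet f x ∩ localUnstable f ε x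

/-- The limit shadowing property. -/
def LimitShadowing (f : X ≃ₜ X) : Prop :=
  ∀ x : ℕ → X, Tendsto (fun k : ℕ => dist (f (x k)) (x (k+1))) atTop (nhds 0) →
    ∃ y : X, Tendsto (fun k : ℕ => dist ((⇑f)^[k] y) (x k)) atTop (nhds 0)

/-- The two-sided limit shadowing property. -/
def TwoSidedLimitShadowing (f : X ≃ₜ X) : Prop :=
  ∀ x : ℤ → X, Tendsto (fun k : ℤ => dist (f (x k)) (x (k+1))) cofinite (nhds 0) →
    ∃ y : X, Tendsto (fun k : ℤ => dist (iterZ f k y) (x k)) cofinite (nhds 0)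

/-- A non-wandering point. -/
def NonWandering (f : X ≃ₜ X) (x : X) : Prop :=
  ∀ U : Set X, IsOpen U → x ∈ U → ∃ k : ℕ, 0 < k ∧ ((⇑f)^[k] '' U ∩ U).Nonempty

/-- The non-wandering set. -/
def omegaSet (f : X ≃ₜ X) : Set X := {x | NonWandering f x}

/-- Topologically mixing. -/
def TopMixing (f : X ≃ₜ X) : Prop :=
  ∀ U V : Set X, IsOpen U → IsOpen V → U.Nonempty → V.Nonempty →
    ∃ n : ℕ, 0 < n ∧ ∀ k ≥ n, ((⇑f)^[k] '' U ∩ V).Nonempty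

/-- `f` is expansive on the set `A` (as a subsystem). -/
def ExpansiveOn (f : X ≃ₜ X) (A : Set X) : Prop :=
  ∃ c > (0:ℝ), ∀ x ∈ A, ∀ y ∈ A,
    (∀ k : ℤ, dist (iterZ f k x) (iterZ f k y) ≤ c) → x = y

/-- The dynamical ball `Γ_δ(x)`. -/
def dynBall (f : X ≃ₜ X) (δ : ℝ) (x : X) : Set X :=
  {y | ∀ k : ℤ, dist (iterZ f k x) (iterZ f k y) ≤ δ}

/-- There is a periodic `ε`-pseudo-orbit containing both `x` and `y`. -/
def ChainRel (f : X ≃ₜ X) (ε : ℝ) (x y : X) : Prop :=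
  ∃ (n : ℕ) (z : ℕ → X), 0 < n ∧ z 0 = x ∧ z n = x ∧ (∃ i ≤ n, z i = y) ∧
    ∀ i < n, dist (f (z i)) (z (i+1)) < ε

/-- The chain recurrent class of `x`. -/
def chainClass (f : X ≃ₜ X) (x : X) : Set X := {y | ∀ ε > (0:ℝ), ChainRel f ε x y}

/-- `h` is a semiconjugacy from `g` on `K` to the full shift on two symbols. -/
def SemiConjShift (g : X → X) (K : Set X) (h : X → (ℤ → Bool)) : Prop :=
  ContinuousOn h K ∧ (∀ s : ℤ → Bool, ∃ p ∈ K, h p = s) ∧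
    ∀ p ∈ K, h (g p) = fun i => h p (i + 1)

/-- `f` admits arbitrarily small topological semi-horseshoes inside `C`. -/
def SmallHorseshoes (f : X ≃ₜ X) (C : Set X) : Prop :=
  ∀ ε > (0:ℝ), ∃ N : ℕ, 1 ≤ N ∧ ∃ K : Set X, K ⊆ C ∧ IsCompact K ∧
    (⇑f)^[N] '' K = K ∧ (∀ k : ℤ, Metric.diam (iterZ f k '' K) ≤ ε) ∧
    ∃ h : X → (ℤ → Bool), SemiConjShift ((⇑f)^[N]) K h


/-!
Given shadowing and the gluing property, an L-shadowing orbit is obtained as a limit. Start from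
an orbit shadowing the pseudo-orbit; then, at scales `ε / 16 / 2 ^ n`, splice into the current
orbit (through points of `Vs ∩ Vu`) true orbits shadowing the two tails of the pseudo-orbit ever
more closely, which exist because the errors of the pseudo-orbit tend to zero. Each splice moves
the orbit by a multiple of the current scale, so the orbits converge uniformly, and the limit is
asymptotic to the pseudo-orbit at both ends.

Conversely, L-shadowing of finite truncations of a pseudo-orbit yields shadowing by compactness,
and L-shadowing of the pseudo-orbit that follows the orbit of `y` up to time `-1` and then jumps
to the orbit of `x` yields a point of `Vs f ε x ∩ Vu f ε y`.
-/

theorem Homeomorph.coe_pow {Y : Type*} [TopologicalSpace Y] (f : Y ≃ₜ Y) (n : ℕ) :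
    ⇑(f ^ n) = (⇑f)^[n] := by
  induction n with
  | zero => rfl
  | succ n ih => rw [pow_succ', Function.iterate_succ', ← ih]; rfl

section Iterates

variable (f : X ≃ₜ X)

theorem iterZ_eq_zpow (k : ℤ) : iterZ f k = ⇑(f ^ k) := by
  funext x
  unfold iterZ
  split_ifs with hk
  · rw [← Homeomorph.coe_pow, ← zpow_natCast, Int.toNat_of_nonneg hk]
  · rw [← Homeomorph.coe_pow, ← zpow_natCast, Int.toNat_of_nonneg (by omega)]
    change (f⁻¹ ^ (-k)) x = _
    rw [inv_zpow', neg_neg]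

theorem iterZ_zero (x : X) : iterZ f 0 x = x := by
  simp [iterZ]

theorem iterZ_natCast (n : ℕ) (x : X) : iterZ f n x = (⇑f)^[n] x := by
  simp [iterZ]

theorem iterZ_add (j k : ℤ) (x : X) : iterZ f (j + k) x = iterZ f j (iterZ f k x) := by
  simp only [iterZ_eq_zpow, zpow_add, Homeomorph.mul_apply]

theorem iterZ_add_one (k : ℤ) (x : X) : iterZ f (k + 1) x = f (iterZ f k x) := by
  rw [add_comm, iterZ_add, iterZ_eq_zpow f 1, zpow_one]

theorem iterZ_symm (k : ℤ) (x : X) : iterZ f.symm k x = iterZ f (-k) x := by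
  change iterZ f⁻¹ k x = _
  rw [iterZ_eq_zpow, iterZ_eq_zpow, inv_zpow']

theorem continuous_iterZ (k : ℤ) : Continuous (iterZ f k) := by
  rw [iterZ_eq_zpow]
  exact (f ^ k).continuous

end Iterates

section LocalSets

variable {f : X ≃ₜ X} {ε : ℝ} {x y : X}

theorem mem_stableSet_iff : y ∈ stableSet f x ↔
    Tendsto (fun k : ℤ => dist (iterZ f k x) (iterZ f k y)) atTop (𝓝 0) := by
  rw [← Nat.map_cast_int_atTop, tendsto_map'_iff]
  simp only [stableSet, mem_ofPred_eq, Function.comp_def, iterZ_natCast]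

theorem mem_localStable_iff : y ∈ localStable f ε x ↔
    ∀ k : ℤ, 0 ≤ k → dist (iterZ f k x) (iterZ f k y) ≤ ε := by
  refine ⟨fun h k hk => ?_, fun h n => ?_⟩
  · lift k to ℕ using hk
    simpa only [iterZ_natCast] using h k
  · simpa only [iterZ_natCast] using h n n.cast_nonneg

theorem mem_Vs_iff : y ∈ Vs f ε x ↔
    Tendsto (fun k : ℤ => dist (iterZ f k x) (iterZ f k y)) atTop (𝓝 0) ∧
      ∀ k : ℤ, 0 ≤ k → dist (iterZ f k x) (iterZ f k y) ≤ ε :=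
  mem_stableSet_iff.and mem_localStable_iff

theorem mem_Vu_iff : y ∈ Vu f ε x ↔
    Tendsto (fun k : ℤ => dist (iterZ f k x) (iterZ f k y)) atBot (𝓝 0) ∧
      ∀ k : ℤ, k ≤ 0 → dist (iterZ f k x) (iterZ f k y) ≤ ε := by
  change y ∈ Vs f.symm ε x ↔ _
  simp only [mem_Vs_iff, iterZ_symm]
  refine and_congr ⟨fun h => ?_, fun h => h.comp tendsto_neg_atTop_atBot⟩
    ⟨fun h k hk => ?_, fun h k hk => h (-k) (by omega)⟩
  · simpa only [Function.comp_def, neg_neg] using h.comp tendsto_neg_atBot_atTop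
  · simpa only [neg_neg] using h (-k) (by omega)

end LocalSets

section Splicing

variable {f : X ≃ₜ X}

theorem exists_spliced_orbit {e d : ℝ}
    (hglue : ∀ p q : X, dist p q < d → (Vs f e p ∩ Vu f e q).Nonempty)
    {w y : X} {a : ℤ} (hwy : dist (iterZ f a w) (iterZ f a y) < d) :
    ∃ z : X, (∀ k ≥ a, dist (iterZ f k z) (iterZ f k w) ≤ e) ∧
      (∀ k ≤ a, dist (iterZ f k z) (iterZ f k y) ≤ e) ∧
      Tendsto (fun k => dist (iterZ f k z) (iterZ f k w)) atTop (𝓝 0) ∧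
      Tendsto (fun k => dist (iterZ f k z) (iterZ f k y)) atBot (𝓝 0) := by
  obtain ⟨p, hps, hpu⟩ := hglue _ _ hwy
  rw [mem_Vs_iff] at hps
  rw [mem_Vu_iff] at hpu
  have hshift : ∀ v k, dist (iterZ f k (iterZ f (-a) p)) (iterZ f k v) =
      dist (iterZ f (k - a) (iterZ f a v)) (iterZ f (k - a) p) := fun v k => by
    rw [← iterZ_add, ← iterZ_add, sub_add_cancel, sub_eq_add_neg, dist_comm]
  refine ⟨iterZ f (-a) p, fun k hk => ?_, fun k hk => ?_, ?_, ?_⟩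
  · rw [hshift]; exact hps.2 _ (by omega)
  · rw [hshift]; exact hpu.2 _ (by omega)
  · simp only [hshift]
    exact hps.1.comp (tendsto_atTop_add_const_right _ (-a) tendsto_id)
  · simp only [hshift]
    exact hpu.1.comp (tendsto_atBot_add_const_right _ (-a) tendsto_id)

end Splicing

section PseudoOrbits

variable (f : X ≃ₜ X) (x : ℤ → X) (a : ℤ) {k : ℤ}

def extendBackward : ℤ → X := fun k => if a ≤ k then x k else iterZ f (k - a) (x a)

def extendForward : ℤ → X := fun k => if k ≤ a then x k else iterZ f (k - a) (x a)

variable {f x a}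

theorem extendBackward_of_le (hk : a ≤ k) : extendBackward f x a k = x k := if_pos hk

theorem extendForward_of_le (hk : k ≤ a) : extendForward f x a k = x k := if_pos hk

theorem apply_extendBackward_of_lt (hk : k < a) :
    f (extendBackward f x a k) = extendBackward f x a (k + 1) := by
  have hsucc : f (iterZ f (k - a) (x a)) = iterZ f (k + 1 - a) (x a) := by
    rw [← iterZ_add_one, sub_add_eq_add_sub]
  rw [extendBackward, if_neg (by omega), hsucc, extendBackward]
  split_ifs with h
  · rw [show k + 1 = a by omega, sub_self, iterZ_zero]
  · rfl

theorem apply_extendForward_of_le (hk : a ≤ k) :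
    f (extendForward f x a k) = extendForward f x a (k + 1) := by
  have hsucc : f (iterZ f (k - a) (x a)) = iterZ f (k + 1 - a) (x a) := by
    rw [← iterZ_add_one, sub_add_eq_add_sub]
  rw [extendForward, extendForward, if_neg (show ¬k + 1 ≤ a by omega), ← hsucc]
  split_ifs with h
  · rw [show k = a by omega, sub_self, iterZ_zero]
  · rfl

theorem dist_extendBackward_le :
    dist (f (extendBackward f x a k)) (extendBackward f x a (k + 1)) ≤
      dist (f (x k)) (x (k + 1)) := by
  rcases lt_or_ge k a with hk | hk
  · rw [apply_extendBackward_of_lt hk, dist_self]; exact dist_nonneg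
  · rw [extendBackward_of_le hk, extendBackward_of_le (by omega)]

theorem dist_extendForward_le :
    dist (f (extendForward f x a k)) (extendForward f x a (k + 1)) ≤
      dist (f (x k)) (x (k + 1)) := by
  rcases lt_or_ge k a with hk | hk
  · rw [extendForward_of_le hk.le, extendForward_of_le (by omega)]
  · rw [apply_extendForward_of_le hk, dist_self]; exact dist_nonneg

end PseudoOrbits

theorem tendsto_dist_apply_cofinite_of_finite {f : X → X} {x : ℤ → X} {s : Set ℤ}
    (hs : s.Finite) (h : ∀ k ∉ s, f (x k) = x (k + 1)) :
    Tendsto (fun k => dist (f (x k)) (x (k + 1))) cofinite (𝓝 0) :=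
  tendsto_const_nhds.congr' <| hs.eventually_cofinite_notMem.mono fun k hk => by
    simp only [h k hk, dist_self]

namespace Shadowing

variable {f : X ≃ₜ X} {x : ℤ → X} {y : X} {e d γ : ℝ}

theorem eventually_exists_shadow_atTop (hs : Shadowing f)
    (hx : Tendsto (fun k => dist (f (x k)) (x (k + 1))) atTop (𝓝 0)) (hγ : 0 < γ) :
    ∀ᶠ a in atTop, ∃ w, ∀ k ≥ a, dist (iterZ f k w) (x k) < γ := by
  obtain ⟨β, hβ, hsh⟩ := hs γ hγ
  filter_upwards [eventually_forall_ge_atTop.2 (hx.eventually (gt_mem_nhds hβ))] with a ha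
  obtain ⟨w, hw⟩ := hsh (extendBackward f x a) fun k => by
    rcases lt_or_ge k a with hk | hk
    · rwa [apply_extendBackward_of_lt hk, dist_self]
    · exact dist_extendBackward_le.trans_lt (ha k hk)
  exact ⟨w, fun k hk => by simpa only [extendBackward_of_le hk] using hw k⟩

theorem eventually_exists_shadow_atBot (hs : Shadowing f)
    (hx : Tendsto (fun k => dist (f (x k)) (x (k + 1))) atBot (𝓝 0)) (hγ : 0 < γ) :
    ∀ᶠ a in atBot, ∃ u, ∀ k ≤ a, dist (iterZ f k u) (x k) < γ := by
  obtain ⟨β, hβ, hsh⟩ := hs γ hγ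
  filter_upwards [eventually_forall_le_atBot.2 (hx.eventually (gt_mem_nhds hβ))] with a ha
  obtain ⟨u, hu⟩ := hsh (extendForward f x a) fun k => by
    rcases lt_or_ge k a with hk | hk
    · exact dist_extendForward_le.trans_lt (ha k hk.le)
    · rwa [apply_extendForward_of_le hk, dist_self]
  exact ⟨u, fun k hk => by simpa only [extendForward_of_le hk] using hu k⟩

theorem exists_refine_atTop (hs : Shadowing f)
    (hglue : ∀ p q : X, dist p q < d → (Vs f e p ∩ Vu f e q).Nonempty)
    (hx : Tendsto (fun k => dist (f (x k)) (x (k + 1))) atTop (𝓝 0))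
    (hy : ∀ᶠ k in atTop, dist (iterZ f k y) (x k) < d / 2) (hγ : 0 < γ) :
    ∃ z, (∀ᶠ k in atTop, dist (iterZ f k z) (x k) < γ) ∧
      Tendsto (fun k => dist (iterZ f k z) (iterZ f k y)) atBot (𝓝 0) ∧
      ∀ k, dist (iterZ f k z) (iterZ f k y) ≤ e + d := by
  have hd : 0 < d := by
    obtain ⟨k, hk⟩ := hy.exists
    linarith [dist_nonneg (x := iterZ f k y) (y := x k)]
  set γ' := min (γ / 2) (d / 2)
  obtain ⟨a, ⟨w, hw⟩, hya⟩ :=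
    ((hs.eventually_exists_shadow_atTop hx (by positivity : 0 < γ')).and
      (eventually_forall_ge_atTop.2 hy)).exists
  have hwy : dist (iterZ f a w) (iterZ f a y) < d := by
    calc dist (iterZ f a w) (iterZ f a y) ≤ dist (iterZ f a w) (x a) + dist (iterZ f a y) (x a) :=
          dist_triangle_right _ _ _
      _ < γ' + d / 2 := add_lt_add (hw a le_rfl) (hya a le_rfl)
      _ ≤ d := by linarith [min_le_right (γ / 2) (d / 2)]
  obtain ⟨z, hzw, hzy, hzw', hzy'⟩ := exists_spliced_orbit hglue hwy
  refine ⟨z, ?_, hzy', fun k => ?_⟩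
  · filter_upwards [hzw'.eventually (gt_mem_nhds (half_pos hγ)), eventually_ge_atTop a]
      with k hzwk hk
    calc dist (iterZ f k z) (x k) ≤ dist (iterZ f k z) (iterZ f k w) + dist (iterZ f k w) (x k) :=
          dist_triangle _ _ _
      _ < γ / 2 + γ' := add_lt_add hzwk (hw k hk)
      _ ≤ γ := by linarith [min_le_left (γ / 2) (d / 2)]
  rcases le_total k a with hk | hk
  · linarith [hzy k hk]
  · calc dist (iterZ f k z) (iterZ f k y)
        ≤ dist (iterZ f k z) (iterZ f k w) + dist (iterZ f k w) (x k) +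
            dist (x k) (iterZ f k y) :=
          dist_triangle4 _ _ _ _
      _ ≤ e + γ' + d / 2 := by
          rw [dist_comm (x k)]
          linarith [hzw k hk, hw k hk, hya k hk]
      _ ≤ e + d := by linarith [min_le_right (γ / 2) (d / 2)]

theorem exists_refine_atBot (hs : Shadowing f)
    (hglue : ∀ p q : X, dist p q < d → (Vs f e p ∩ Vu f e q).Nonempty)
    (hx : Tendsto (fun k => dist (f (x k)) (x (k + 1))) atBot (𝓝 0))
    (hy : ∀ᶠ k in atBot, dist (iterZ f k y) (x k) < d / 2) (hγ : 0 < γ) :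
    ∃ z, (∀ᶠ k in atBot, dist (iterZ f k z) (x k) < γ) ∧
      Tendsto (fun k => dist (iterZ f k z) (iterZ f k y)) atTop (𝓝 0) ∧
      ∀ k, dist (iterZ f k z) (iterZ f k y) ≤ e + d := by
  have hd : 0 < d := by
    obtain ⟨k, hk⟩ := hy.exists
    linarith [dist_nonneg (x := iterZ f k y) (y := x k)]
  set γ' := min (γ / 2) (d / 2)
  obtain ⟨a, ⟨u, hu⟩, hya⟩ :=
    ((hs.eventually_exists_shadow_atBot hx (by positivity : 0 < γ')).and
      (eventually_forall_le_atBot.2 hy)).exists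
  have hyu : dist (iterZ f a y) (iterZ f a u) < d := by
    calc dist (iterZ f a y) (iterZ f a u) ≤ dist (iterZ f a y) (x a) + dist (iterZ f a u) (x a) :=
          dist_triangle_right _ _ _
      _ < d / 2 + γ' := add_lt_add (hya a le_rfl) (hu a le_rfl)
      _ ≤ d := by linarith [min_le_right (γ / 2) (d / 2)]
  obtain ⟨z, hzy, hzu, hzy', hzu'⟩ := exists_spliced_orbit hglue hyu
  refine ⟨z, ?_, hzy', fun k => ?_⟩
  · filter_upwards [hzu'.eventually (gt_mem_nhds (half_pos hγ)), eventually_le_atBot a]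
      with k hzuk hk
    calc dist (iterZ f k z) (x k) ≤ dist (iterZ f k z) (iterZ f k u) + dist (iterZ f k u) (x k) :=
          dist_triangle _ _ _
      _ < γ / 2 + γ' := add_lt_add hzuk (hu k hk)
      _ ≤ γ := by linarith [min_le_left (γ / 2) (d / 2)]
  rcases le_total a k with hk | hk
  · linarith [hzy k hk]
  · calc dist (iterZ f k z) (iterZ f k y)
        ≤ dist (iterZ f k z) (iterZ f k u) + dist (iterZ f k u) (x k) +
            dist (x k) (iterZ f k y) :=
          dist_triangle4 _ _ _ _
      _ ≤ e + γ' + d / 2 := by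
          rw [dist_comm (x k)]
          linarith [hzu k hk, hu k hk, hya k hk]
      _ ≤ e + d := by linarith [min_le_right (γ / 2) (d / 2)]

theorem exists_refine (hs : Shadowing f)
    (hglue : ∀ p q : X, dist p q < d → (Vs f e p ∩ Vu f e q).Nonempty)
    (hx : Tendsto (fun k => dist (f (x k)) (x (k + 1))) cofinite (𝓝 0))
    (hy : ∀ᶠ k in cofinite, dist (iterZ f k y) (x k) < d / 4) (hγ : 0 < γ) :
    ∃ z, (∀ᶠ k in cofinite, dist (iterZ f k z) (x k) < γ) ∧
      ∀ k, dist (iterZ f k y) (iterZ f k z) ≤ 2 * (e + d) := by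
  have hd : 0 < d := by
    obtain ⟨k, hk⟩ := hy.exists
    linarith [dist_nonneg (x := iterZ f k y) (y := x k)]
  rw [Int.cofinite_eq, tendsto_sup] at hx
  rw [Int.cofinite_eq, eventually_sup] at hy
  obtain ⟨y₁, hy₁top, hy₁y, hy₁y_le⟩ :=
    hs.exists_refine_atTop (y := y) hglue hx.2 (hy.2.mono fun k hk => by linarith) (half_pos hγ)
  have hy₁bot : ∀ᶠ k in atBot, dist (iterZ f k y₁) (x k) < d / 2 := by
    filter_upwards [hy.1, hy₁y.eventually (gt_mem_nhds (by positivity : 0 < d / 4))]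
      with k hyk hy₁k
    linarith [dist_triangle (iterZ f k y₁) (iterZ f k y) (x k)]
  obtain ⟨z, hzbot, hzy₁, hzy₁_le⟩ := hs.exists_refine_atBot hglue hx.1 hy₁bot hγ
  refine ⟨z, Int.cofinite_eq ▸ eventually_sup.2 ⟨hzbot, ?_⟩, fun k => ?_⟩
  · filter_upwards [hy₁top, hzy₁.eventually (gt_mem_nhds (half_pos hγ))] with k hy₁k hzk
    linarith [dist_triangle (iterZ f k z) (iterZ f k y₁) (x k)]
  · rw [dist_comm]
    linarith [dist_triangle (iterZ f k z) (iterZ f k y₁) (iterZ f k y), hzy₁_le k, hy₁y_le k]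

end Shadowing

theorem exists_seq_of_forall_exists {α : Type*} {P : ℕ → α → Prop}
    {R : ℕ → α → α → Prop} {a : α} (h₀ : P 0 a)
    (hstep : ∀ n b, P n b → ∃ c, P (n + 1) c ∧ R n b c) :
    ∃ y : ℕ → α, y 0 = a ∧ ∀ n, P n (y n) ∧ R n (y n) (y (n + 1)) := by
  choose g hg using hstep
  let s : ∀ n, {b // P n b} := fun n =>
    Nat.rec ⟨a, h₀⟩ (fun n b => ⟨g n b b.2, (hg n b b.2).1⟩) n
  exact ⟨fun n => (s n).1, rfl, fun n => ⟨(s n).2, (hg n _ (s n).2).2⟩⟩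

theorem exists_orbit_limit_of_dist_le_geometric_two [CompleteSpace X] {f : X ≃ₜ X}
    {y : ℕ → X} {C : ℝ}
    (h : ∀ n k, dist (iterZ f k (y n)) (iterZ f k (y (n + 1))) ≤ C / 2 / 2 ^ n) :
    ∃ z, ∀ n k, dist (iterZ f k (y n)) (iterZ f k z) ≤ C / 2 ^ n := by
  obtain ⟨z, hz⟩ := cauchySeq_tendsto_of_complete <|
    cauchySeq_of_le_geometric_two (C := C) fun n => by simpa only [iterZ_zero] using h n 0
  exact ⟨z, fun n k => dist_le_of_le_geometric_two_of_tendsto (fun n => h n k)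
    (((continuous_iterZ f k).tendsto z).comp hz) n⟩

theorem exists_shadow_of_refining_seq [CompleteSpace X] {f : X ≃ₜ X} {x : ℤ → X}
    {y : ℕ → X} {ε : ℝ} (hy₀ : ∀ k, dist (iterZ f k (y 0)) (x k) ≤ ε / 2)
    (hy : ∀ n, ∀ᶠ k in cofinite, dist (iterZ f k (y n)) (x k) < ε / 2 / 2 ^ n)
    (hstep : ∀ n k, dist (iterZ f k (y n)) (iterZ f k (y (n + 1))) ≤ ε / 2 / 2 / 2 ^ n) :
    ∃ z, (∀ k, dist (iterZ f k z) (x k) ≤ ε) ∧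
      Tendsto (fun k => dist (iterZ f k z) (x k)) cofinite (𝓝 0) := by
  obtain ⟨z, hz⟩ := exists_orbit_limit_of_dist_le_geometric_two hstep
  have hzx : ∀ n k, dist (iterZ f k z) (x k) ≤
      ε / 2 / 2 ^ n + dist (iterZ f k (y n)) (x k) := fun n k =>
    (dist_triangle_left _ _ (iterZ f k (y n))).trans (by gcongr; exact hz n k)
  refine ⟨z, fun k => by linarith [hzx 0 k, hy₀ k, show ε / 2 / 2 ^ 0 = ε / 2 by simp], ?_⟩
  refine tendsto_order.2
    ⟨fun b hb => .of_forall fun k => hb.trans_le dist_nonneg, fun b hb => ?_⟩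
  obtain ⟨n, hn⟩ := ((tendsto_const_nhds.div_atTop
    (tendsto_pow_atTop_atTop_of_one_lt one_lt_two)).eventually (gt_mem_nhds (half_pos hb))).exists
    (f := (atTop : Filter ℕ)) (p := fun n => ε / 2 / 2 ^ n < b / 2)
  filter_upwards [hy n] with k hk
  linarith [hzx n k]

theorem Shadowing.lShadowing [CompleteSpace X] {f : X ≃ₜ X} (hs : Shadowing f)
    (hglue : ∀ ε > (0:ℝ), ∃ δ > (0:ℝ), ∀ x y : X,
      dist x y < δ → (Vs f ε x ∩ Vu f ε y).Nonempty) : LShadowing f := by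
  intro ε hε
  have hscale : ∀ n : ℕ, ∃ d > 0, d ≤ ε / 16 / 2 ^ n ∧ ∀ p q : X, dist p q < d →
      (Vs f (ε / 16 / 2 ^ n) p ∩ Vu f (ε / 16 / 2 ^ n) q).Nonempty := fun n => by
    obtain ⟨δ, hδ, h⟩ := hglue (ε / 16 / 2 ^ n) (by positivity)
    exact ⟨min δ _, lt_min hδ (by positivity), min_le_right _ _,
      fun p q hpq => h p q (hpq.trans_le (min_le_left _ _))⟩
  choose d hd hde hdglue using hscale
  obtain ⟨β, hβ, hsh⟩ := hs (d 0 / 4) (by linarith [hd 0])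
  refine ⟨β / 2, half_pos hβ, fun x hxβ hx => ?_⟩
  obtain ⟨y₀, hy₀⟩ := hsh x fun k => (hxβ k).trans_lt (half_lt_self hβ)
  obtain ⟨y, rfl, hy⟩ := exists_seq_of_forall_exists
    (P := fun n y => ∀ᶠ k in cofinite, dist (iterZ f k y) (x k) < d n / 4)
    (R := fun n y y' => ∀ k, dist (iterZ f k y) (iterZ f k y') ≤ ε / 2 / 2 / 2 ^ n)
    (Eventually.of_forall hy₀) fun n y hy => by
      obtain ⟨y', hy', hyy'⟩ := hs.exists_refine (hdglue n) hx hy (γ := d (n + 1) / 4)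
        (by linarith [hd (n + 1)])
      refine ⟨y', hy', fun k => (hyy' k).trans ?_⟩
      linarith [hde n, show ε / 2 / 2 / 2 ^ n = 4 * (ε / 16 / 2 ^ n) by ring]
  have hd_small : ∀ n, d n / 4 < ε / 2 / 2 ^ n := fun n => by
    linarith [hde n, show ε / 2 / 2 ^ n = 8 * (ε / 16 / 2 ^ n) by ring,
      show 0 < ε / 16 / 2 ^ n by positivity]
  exact exists_shadow_of_refining_seq
    (fun k => by linarith [hy₀ k, hd_small 0, pow_zero (2 : ℝ)])
    (fun n => (hy n).1.mono fun k hk => hk.trans (hd_small n)) fun n => (hy n).2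

theorem exists_shadow_of_forall_exists_shadow_window [CompactSpace X] {f : X ≃ₜ X}
    {x : ℤ → X} {η : ℝ}
    (h : ∀ m : ℕ, ∃ z, ∀ k : ℤ, |k| ≤ m → dist (iterZ f k z) (x k) ≤ η) :
    ∃ z, ∀ k, dist (iterZ f k z) (x k) ≤ η := by
  set S : ℕ → Set X := fun m => {z | ∀ k : ℤ, |k| ≤ m → dist (iterZ f k z) (x k) ≤ η}
  have hS : ∀ m, IsClosed (S m) := fun m => by
    simp only [S, ofPred_forall]
    exact isClosed_iInter fun k => isClosed_iInter fun _ =>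
      isClosed_le ((continuous_iterZ f k).dist continuous_const) continuous_const
  obtain ⟨z, hz⟩ := IsCompact.nonempty_iInter_of_sequence_nonempty_isCompact_isClosed S
    (fun m z hz k hk => hz k (hk.trans (by push_cast; omega))) h (hS 0).isCompact hS
  exact ⟨z, fun k => mem_iInter.1 hz k.natAbs k (Int.abs_eq_natAbs k).le⟩

section JoinOrbits

variable (f : X ≃ₜ X) (y x : X) {k : ℤ}

def joinOrbits : ℤ → X := fun k => if k < 0 then iterZ f k y else iterZ f k x

variable {f y x}

theorem joinOrbits_of_neg (hk : k < 0) : joinOrbits f y x k = iterZ f k y := if_pos hk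

theorem joinOrbits_of_nonneg (hk : 0 ≤ k) : joinOrbits f y x k = iterZ f k x := if_neg (by omega)

theorem apply_joinOrbits_of_ne (hk : k ≠ -1) :
    f (joinOrbits f y x k) = joinOrbits f y x (k + 1) := by
  rcases lt_or_ge k (-1) with hk' | hk'
  · rw [joinOrbits_of_neg (by omega), joinOrbits_of_neg (by omega), iterZ_add_one]
  · rw [joinOrbits_of_nonneg (by omega), joinOrbits_of_nonneg (by omega), iterZ_add_one]

theorem dist_apply_joinOrbits_le :
    dist (f (joinOrbits f y x k)) (joinOrbits f y x (k + 1)) ≤ dist x y := by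
  by_cases hk : k = -1
  · rw [hk, joinOrbits_of_neg (by norm_num), joinOrbits_of_nonneg (by norm_num), ← iterZ_add_one,
      neg_add_cancel, iterZ_zero, iterZ_zero, dist_comm]
  · rw [apply_joinOrbits_of_ne hk, dist_self]
    exact dist_nonneg

end JoinOrbits

namespace LShadowing

variable {f : X ≃ₜ X}

theorem shadowing [CompactSpace X] (h : LShadowing f) : Shadowing f := by
  intro ε hε
  obtain ⟨δ, hδ, hL⟩ := h (ε / 2) (half_pos hε)
  refine ⟨δ, hδ, fun x hx => ?_⟩
  obtain ⟨z, hz⟩ := exists_shadow_of_forall_exists_shadow_window (f := f) (x := x) fun m => by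
    set w := extendForward f (extendBackward f x (-m)) m with hw
    have hwx : ∀ k : ℤ, |k| ≤ m → w k = x k := fun k hk => by
      rw [abs_le] at hk
      rw [hw, extendForward_of_le hk.2, extendBackward_of_le hk.1]
    have hw_orbit : ∀ k ∉ Ico (-(m : ℤ)) m, f (w k) = w (k + 1) := fun k hk => by
      rw [mem_Ico, not_and_or, not_le, not_lt] at hk
      rcases hk with hk | hk
      · rw [hw, extendForward_of_le (by omega), extendForward_of_le (by omega),
          apply_extendBackward_of_lt hk]
      · exact apply_extendForward_of_le hk
    obtain ⟨z, hz, -⟩ := hL w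
      (fun k => dist_extendForward_le.trans (dist_extendBackward_le.trans (hx k).le))
      (tendsto_dist_apply_cofinite_of_finite (finite_Ico _ _) hw_orbit)
    exact ⟨z, fun k hk => hwx k hk ▸ hz k⟩
  exact ⟨z, fun k => (hz k).trans_lt (half_lt_self hε)⟩

theorem exists_mem_Vs_inter_Vu (h : LShadowing f) :
    ∀ ε > (0:ℝ), ∃ δ > (0:ℝ), ∀ x y : X,
      dist x y < δ → (Vs f ε x ∩ Vu f ε y).Nonempty := by
  intro ε hε
  obtain ⟨δ, hδ, hL⟩ := h (ε / 2) (half_pos hε)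
  refine ⟨min δ (ε / 2), lt_min hδ (half_pos hε), fun x y hxy => ?_⟩
  obtain ⟨p, hp, hp_lim⟩ := hL (joinOrbits f y x)
    (fun k => dist_apply_joinOrbits_le.trans (hxy.le.trans (min_le_left _ _)))
    (tendsto_dist_apply_cofinite_of_finite (finite_singleton (-1)) fun k hk =>
      apply_joinOrbits_of_ne hk)
  rw [Int.cofinite_eq, tendsto_sup] at hp_lim
  have hpx : ∀ k, 0 ≤ k →
      dist (iterZ f k x) (iterZ f k p) = dist (iterZ f k p) (joinOrbits f y x k) :=
    fun k hk => by rw [joinOrbits_of_nonneg hk, dist_comm]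
  have hpy : ∀ k, k < 0 →
      dist (iterZ f k y) (iterZ f k p) = dist (iterZ f k p) (joinOrbits f y x k) :=
    fun k hk => by rw [joinOrbits_of_neg hk, dist_comm]
  refine ⟨p, mem_Vs_iff.2 ⟨?_, fun k hk => ?_⟩, mem_Vu_iff.2 ⟨?_, fun k hk => ?_⟩⟩
  · exact hp_lim.2.congr' ((eventually_ge_atTop 0).mono fun k hk => (hpx k hk).symm)
  · linarith [hpx k hk, hp k]
  · exact hp_lim.1.congr' ((eventually_lt_atBot 0).mono fun k hk => (hpy k hk).symm)
  rcases hk.lt_or_eq with hk | rfl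
  · linarith [hpy k hk, hp k]
  · have hp0 := (hpx 0 le_rfl).trans_le (hp 0)
    rw [iterZ_zero, iterZ_zero] at hp0 ⊢
    linarith [dist_triangle y x p, dist_comm x y, min_le_right δ (ε / 2)]

end LShadowing

/-- characterization of L-shadowing. -/
theorem lshadowing_iff [CompactSpace X] (f : X ≃ₜ X) :
    LShadowing f ↔ (Shadowing f ∧ ∀ ε > (0:ℝ), ∃ δ > (0:ℝ), ∀ x y : X,
      dist x y < δ → (Vs f ε x ∩ Vu f ε y).Nonempty) :=
  ⟨fun h => ⟨h.shadowing, h.exists_mem_Vs_inter_Vu⟩,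
    fun ⟨hs, hglue⟩ => hs.lShadowing hglue⟩
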